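/- arXiv:1108.0519 — 2 statements merged into one kernel-verified Lean document; each statement's English description precedes it below -/
import Mathlib

section
/- Sector containment around an extremal point (claim from the proof of Lemma 1): let S ⊆ ℤ be finite and nonempty, c : S → ℝ, P = convexHull{(c(l), l) : l ∈ S} + {(t, 0) : t ≥ 0} ⊆ ℝ², y : ℤ → ℝ, Y = {(−y(l), l) : l ∈ ℤ}, and for i ∈ ℤ let a_i be the minimal real such that P_i := P + (a_i, i) lies above Y. Suppose (u, l) ∈ P_i ∩ Y with l ∈ ℤ. Then every point (v, w) ∈ P_i satisfies: if w ≤ l then v ≥ u − (a_{i+1} − a_i)·(l − w), and if w ≥ l then v ≥ u − (a_{i−1} − a_i)·(w − l). -/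
/-!
Since every `P_j` lies above `Y` and `P_{i±1} = P_i + (a_{i±1} - a_i, ±1)`, the points of `P_i` at
height `l` lie right of `u`, and those at height `l ∓ 1` lie right of `u - (a_{i±1} - a_i)`. Beyond
height `l ∓ 1` the bound follows by convexity, along the segment to `(u, l) ∈ P_i`. Strictly between
the heights `l` and `l ∓ 1` it holds because the vertices of `P` have integer heights: every such
point of `P_i` lies on a segment of `P_i` joining the two heights.
-/

open Pointwise

/-- The extended Newton polygon: convex hull of the points `(c l, l)`, `l ∈ S`,
plus the ray `{(t, 0) : t ≥ 0}`. -/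
def NewtonPolygon (S : Finset ℤ) (c : ℤ → ℝ) : Set (ℝ × ℝ) :=
  convexHull ℝ {p | ∃ l ∈ S, p = (c l, (l : ℝ))} + {q | ∃ t : ℝ, 0 ≤ t ∧ q = (t, 0)}

/-- The translate `P + (a, i)` of a subset of `ℝ²`. -/
def shiftSet (P : Set (ℝ × ℝ)) (a : ℝ) (i : ℤ) : Set (ℝ × ℝ) :=
  (fun p => (p.1 + a, p.2 + (i : ℝ))) '' P

/-- `U` lies above `Y = {(-y l, l) : l ∈ ℤ}` if every point `(v, l) ∈ U` with
integer second coordinate `l` satisfies `v ≥ -y l`. -/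
def LiesAbove (y : ℤ → ℝ) (U : Set (ℝ × ℝ)) : Prop :=
  ∀ (v : ℝ) (l : ℤ), (v, (l : ℝ)) ∈ U → -y l ≤ v

/-- The set `Y = {(-y l, l) : l ∈ ℤ} ⊆ ℝ²`. -/
def YSet (y : ℤ → ℝ) : Set (ℝ × ℝ) := {p | ∃ l : ℤ, p = (-y l, (l : ℝ))}

/-- `a` is the minimal real such that `P + (a, i)` lies above `Y`. -/
def IsMinimalLift (y : ℤ → ℝ) (P : Set (ℝ × ℝ)) (i : ℤ) (a : ℝ) : Prop :=
  LiesAbove y (shiftSet P a i) ∧ ∀ a' < a, ¬ LiesAbove y (shiftSet P a' i)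

section Levels

variable {E : Type*} [AddCommGroup E] [Module ℝ E]

theorem exists_mem_segment_apply_eq (η : E →ₗ[ℝ] ℝ) {a b : E} {t : ℝ}
    (ht : t ∈ Set.uIcc (η a) (η b)) : ∃ q ∈ segment ℝ a b, η q = t := by
  have h := image_segment ℝ η.toAffineMap a b
  rw [LinearMap.coe_toAffineMap] at h
  rwa [← segment_eq_uIcc, ← h] at ht

theorem mem_segment_of_mem_segment_of_mem_segment {a b p q₁ q₂ : E} (hp : p ∈ segment ℝ a b)
    (hq₁ : q₁ ∈ segment ℝ a p) (hq₂ : q₂ ∈ segment ℝ p b) : p ∈ segment ℝ q₁ q₂ := by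
  rw [mem_segment_iff_wbtw] at *
  exact (hp.trans_left_right hq₁).trans_right_left hq₂

theorem exists_mem_segment_of_mem_convexHull (η : E →ₗ[ℝ] ℝ) {V : Set E} {α β : ℝ}
    (hV : ∀ v ∈ V, η v ≤ α ∨ β ≤ η v) {p : E} (hp : p ∈ convexHull ℝ V)
    (hαp : α < η p) (hpβ : η p < β) :
    ∃ q₁ ∈ convexHull ℝ V, ∃ q₂ ∈ convexHull ℝ V, η q₁ = α ∧ η q₂ = β ∧ p ∈ segment ℝ q₁ q₂ := by
  set V₁ := V ∩ {v | η v ≤ α}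
  set V₂ := V ∩ {v | β ≤ η v}
  have hV₁ : convexHull ℝ V₁ ⊆ {v | η v ≤ α} :=
    convexHull_min Set.inter_subset_right (convex_halfSpace_le η.isLinear α)
  have hV₂ : convexHull ℝ V₂ ⊆ {v | β ≤ η v} :=
    convexHull_min Set.inter_subset_right (convex_halfSpace_ge η.isLinear β)
  have hV₁₂ : V = V₁ ∪ V₂ := by
    ext v
    exact ⟨fun hv => (hV v hv).imp (⟨hv, ·⟩) (⟨hv, ·⟩), by rintro (hv | hv) <;> exact hv.1⟩
  have hne₁ : V₁.Nonempty := by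
    by_contra h
    rw [hV₁₂, Set.not_nonempty_iff_eq_empty.mp h, Set.empty_union] at hp
    exact hpβ.not_ge (hV₂ hp)
  have hne₂ : V₂.Nonempty := by
    by_contra h
    rw [hV₁₂, Set.not_nonempty_iff_eq_empty.mp h, Set.union_empty] at hp
    exact hαp.not_ge (hV₁ hp)
  have hpV := hp
  rw [hV₁₂, convexHull_union hne₁ hne₂, mem_convexJoin] at hp
  obtain ⟨a, ha, b, hb, hpab⟩ := hp
  have hsub {x y} := (convex_convexHull ℝ V).segment_subset (x := x) (y := y)
  obtain ⟨q₁, hq₁, rfl⟩ := exists_mem_segment_apply_eq η (a := a) (b := p) (t := α)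
    (Set.mem_uIcc_of_le (hV₁ ha) hαp.le)
  obtain ⟨q₂, hq₂, rfl⟩ := exists_mem_segment_apply_eq η (a := p) (b := b) (t := β)
    (Set.mem_uIcc_of_le hpβ.le (hV₂ hb))
  exact ⟨q₁, hsub (convexHull_mono Set.inter_subset_left ha) hpV hq₁,
    q₂, hsub hpV (convexHull_mono Set.inter_subset_left hb) hq₂, rfl, rfl,
    mem_segment_of_mem_segment_of_mem_segment hpab hq₁ hq₂⟩

theorem Convex.le_of_le_on_levels {C : Set E} (hC : Convex ℝ C) (η ψ : E →ₗ[ℝ] ℝ)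
    {M L r : ℝ} (hML : M < L) {z : E} (hz : z ∈ C) (hzL : η z = L) (hψz : ψ z ≤ r)
    (hL : ∀ q ∈ C, η q = L → r ≤ ψ q) (hM : ∀ q ∈ C, η q = M → r ≤ ψ q)
    (hseg : ∀ p ∈ C, M < η p → η p < L →
      ∃ q₁ ∈ C, ∃ q₂ ∈ C, η q₁ = M ∧ η q₂ = L ∧ p ∈ segment ℝ q₁ q₂)
    {p : E} (hp : p ∈ C) (hpL : η p ≤ L) : r ≤ ψ p := by
  rcases hpL.eq_or_lt with hpL | hpL
  · exact hL p hp hpL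
  rcases lt_or_ge M (η p) with hMp | hpM
  · obtain ⟨q₁, hq₁, q₂, hq₂, hηq₁, hηq₂, hp⟩ := hseg p hp hMp hpL
    exact (convex_halfSpace_ge ψ.isLinear r).segment_subset (hM q₁ hq₁ hηq₁) (hL q₂ hq₂ hηq₂) hp
  · -- `[p, z]` crosses level `M`, where `r ≤ ψ`, while `ψ z ≤ r`
    obtain ⟨q, hq, hηq⟩ := exists_mem_segment_apply_eq η (a := p) (b := z) (t := M)
      (Set.mem_uIcc_of_le hpM (hzL ▸ hML.le))
    have hψq := hM q (hC.segment_subset hp hz hq) hηq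
    obtain ⟨θ₁, θ₂, hθ₁, hθ₂, hθ, rfl⟩ := hq
    simp only [map_add, map_smul, smul_eq_mul, hzL] at hψq hηq
    obtain rfl : θ₂ = 1 - θ₁ := by linarith
    have hθ₁pos : 0 < θ₁ := by
      refine hθ₁.lt_of_ne fun h => ?_
      rw [← h] at hηq
      linarith
    by_contra! hψp
    nlinarith [mul_lt_mul_of_pos_left hψp hθ₁pos, mul_le_mul_of_nonneg_left hψz hθ₂]

end Levels

-- For convex `C` this says that the lower boundary of `C` is affine between consecutive integer
-- heights.
def HasIntegerBreaks (C : Set (ℝ × ℝ)) : Prop :=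
  ∀ p ∈ C, ∀ n : ℤ, (n : ℝ) < p.2 → p.2 < n + 1 →
    ∃ q₁ ∈ C, ∃ q₂ ∈ C, q₁.2 = n ∧ q₂.2 = n + 1 ∧ p ∈ segment ℝ q₁ q₂

theorem hasIntegerBreaks_convexHull {V : Set (ℝ × ℝ)} (hV : ∀ v ∈ V, ∃ k : ℤ, v.2 = k) :
    HasIntegerBreaks (convexHull ℝ V) := by
  intro p hp n hnp hpn
  refine exists_mem_segment_of_mem_convexHull (LinearMap.snd ℝ ℝ ℝ) (fun v hv => ?_) hp hnp hpn
  obtain ⟨k, hk⟩ := hV v hv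
  rw [LinearMap.snd_apply, hk]
  rcases le_or_gt k n with h | h
  · exact Or.inl (mod_cast h)
  · exact Or.inr (mod_cast h)

theorem HasIntegerBreaks.add {C W : Set (ℝ × ℝ)} (hC : HasIntegerBreaks C)
    (hW : ∀ w ∈ W, ∃ k : ℤ, w.2 = k) : HasIntegerBreaks (C + W) := by
  rintro _ ⟨x, hx, w, hw, rfl⟩ n hnp hpn
  obtain ⟨k, hk⟩ := hW w hw
  rw [Prod.snd_add, hk] at hnp hpn
  obtain ⟨q₁, hq₁, q₂, hq₂, h₁, h₂, hseg⟩ :=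
    hC x hx (n - k) (by push_cast; linarith) (by push_cast; linarith)
  refine ⟨q₁ + w, Set.add_mem_add hq₁ hw, q₂ + w, Set.add_mem_add hq₂ hw,
    by simp [h₁, hk], by simp [h₂, hk]; ring, ?_⟩
  have hseg' := (mem_segment_translate ℝ w).2 hseg
  rwa [add_comm w x, add_comm w q₁, add_comm w q₂] at hseg'

theorem shiftSet_eq_add (P : Set (ℝ × ℝ)) (a : ℝ) (i : ℤ) :
    shiftSet P a i = P + {(a, (i : ℝ))} := by
  rw [Set.add_singleton]
  rfl

theorem Convex.shiftSet {P : Set (ℝ × ℝ)} (hP : Convex ℝ P) (a : ℝ) (i : ℤ) :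
    Convex ℝ (shiftSet P a i) := by
  rw [shiftSet_eq_add]
  exact hP.add (convex_singleton _)

theorem HasIntegerBreaks.shiftSet {P : Set (ℝ × ℝ)} (hP : HasIntegerBreaks P) (a : ℝ) (i : ℤ) :
    HasIntegerBreaks (shiftSet P a i) := by
  rw [shiftSet_eq_add]
  exact hP.add (by simp)

theorem convex_newtonPolygon (S : Finset ℤ) (c : ℤ → ℝ) : Convex ℝ (NewtonPolygon S c) := by
  refine (convex_convexHull ℝ _).add ?_
  rintro _ ⟨s, hs, rfl⟩ _ ⟨t, ht, rfl⟩ θ₁ θ₂ hθ₁ hθ₂ -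
  exact ⟨θ₁ * s + θ₂ * t, by positivity, by simp⟩

theorem hasIntegerBreaks_newtonPolygon (S : Finset ℤ) (c : ℤ → ℝ) :
    HasIntegerBreaks (NewtonPolygon S c) :=
  (hasIntegerBreaks_convexHull (by rintro _ ⟨l, -, rfl⟩; exact ⟨l, rfl⟩)).add
    (by rintro _ ⟨t, -, rfl⟩; exact ⟨0, by simp⟩)

theorem HasIntegerBreaks.sub_mul_le_fst_of_snd_le {C : Set (ℝ × ℝ)} (hCb : HasIntegerBreaks C)
    (hC : Convex ℝ C) {z : ℝ × ℝ} (hz : z ∈ C) {n : ℤ} (hzn : z.2 = n) {d : ℝ}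
    (hn : ∀ q ∈ C, q.2 = n → z.1 ≤ q.1) (hdown : ∀ q ∈ C, q.2 = n - 1 → z.1 - d ≤ q.1)
    {q : ℝ × ℝ} (hq : q ∈ C) (hqn : q.2 ≤ n) : z.1 - d * (n - q.2) ≤ q.1 := by
  have hseg : ∀ p ∈ C, (n : ℝ) - 1 < p.2 → p.2 < n →
      ∃ q₁ ∈ C, ∃ q₂ ∈ C, q₁.2 = n - 1 ∧ q₂.2 = n ∧ p ∈ segment ℝ q₁ q₂ := fun p hp h₁ h₂ => by
    simpa using hCb p hp (n - 1) (by push_cast; exact h₁) (by simpa using h₂)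
  have := hC.le_of_le_on_levels (LinearMap.snd ℝ ℝ ℝ)
    (LinearMap.fst ℝ ℝ ℝ - d • LinearMap.snd ℝ ℝ ℝ) (M := n - 1) (L := n)
    (r := z.1 - d * n) (by linarith) hz hzn (by simp [hzn])
    (fun q hq hqn => by simp [hqn, hn q hq hqn])
    (fun q hq hqn => by simp [hqn]; linarith [hdown q hq hqn])
    hseg hq hqn
  simp only [LinearMap.sub_apply, LinearMap.smul_apply, smul_eq_mul, LinearMap.fst_apply,
    LinearMap.snd_apply] at this
  linarith

theorem HasIntegerBreaks.sub_mul_le_fst_of_le_snd {C : Set (ℝ × ℝ)} (hCb : HasIntegerBreaks C)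
    (hC : Convex ℝ C) {z : ℝ × ℝ} (hz : z ∈ C) {n : ℤ} (hzn : z.2 = n) {d : ℝ}
    (hn : ∀ q ∈ C, q.2 = n → z.1 ≤ q.1) (hup : ∀ q ∈ C, q.2 = n + 1 → z.1 - d ≤ q.1)
    {q : ℝ × ℝ} (hq : q ∈ C) (hqn : n ≤ q.2) : z.1 - d * (q.2 - n) ≤ q.1 := by
  have hseg : ∀ p ∈ C, -((n : ℝ) + 1) < -p.2 → -p.2 < -n →
      ∃ q₁ ∈ C, ∃ q₂ ∈ C, -q₁.2 = -(n + 1) ∧ -q₂.2 = -n ∧ p ∈ segment ℝ q₁ q₂ := by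
    intro p hp h₁ h₂
    obtain ⟨q₁, hq₁, q₂, hq₂, hq₁n, hq₂n, hp⟩ := hCb p hp n (by linarith) (by linarith)
    exact ⟨q₂, hq₂, q₁, hq₁, by rw [hq₂n], by rw [hq₁n], segment_symm ℝ q₁ q₂ ▸ hp⟩
  have := hC.le_of_le_on_levels (-LinearMap.snd ℝ ℝ ℝ)
    (LinearMap.fst ℝ ℝ ℝ + d • LinearMap.snd ℝ ℝ ℝ) (M := -(n + 1)) (L := -n)
    (r := z.1 + d * n) (by linarith) hz (by simp [hzn]) (by simp [hzn])
    (fun q hq hqn => by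
      simp only [LinearMap.neg_apply, LinearMap.snd_apply, neg_inj] at hqn
      simp [hqn, hn q hq hqn])
    (fun q hq hqn => by
      simp only [LinearMap.neg_apply, LinearMap.snd_apply, neg_inj] at hqn
      simp [hqn]; linarith [hup q hq hqn])
    hseg hq (by simpa using hqn)
  simp only [LinearMap.add_apply, LinearMap.smul_apply, smul_eq_mul, LinearMap.fst_apply,
    LinearMap.snd_apply] at this
  linarith

theorem LiesAbove.le_of_mem_shiftSet {y : ℤ → ℝ} {P : Set (ℝ × ℝ)} {a' : ℝ} {j : ℤ}
    (h : LiesAbove y (shiftSet P a' j)) {a : ℝ} {i : ℤ} {q : ℝ × ℝ} (hq : q ∈ shiftSet P a i)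
    {l : ℤ} (hl : q.2 + (j - i) = l) : -y l ≤ q.1 + (a' - a) := by
  obtain ⟨p, hp, rfl⟩ := hq
  refine h _ l ⟨p, hp, ?_⟩
  simp only [Prod.mk.injEq] at hl ⊢
  constructor <;> linarith

theorem sector_containment_general
    (S : Finset ℤ) (c : ℤ → ℝ) (y : ℤ → ℝ) (a : ℤ → ℝ)
    (ha : ∀ i : ℤ, IsMinimalLift y (NewtonPolygon S c) i (a i))
    (i : ℤ) (u : ℝ) (l : ℤ)
    (hu : (u, (l : ℝ)) ∈ shiftSet (NewtonPolygon S c) (a i) i ∩ YSet y) :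
    ∀ v w : ℝ, (v, w) ∈ shiftSet (NewtonPolygon S c) (a i) i →
      (w ≤ (l : ℝ) → u - (a (i + 1) - a i) * ((l : ℝ) - w) ≤ v) ∧
      ((l : ℝ) ≤ w → u - (a (i - 1) - a i) * (w - (l : ℝ)) ≤ v) := by
  obtain ⟨hul, l', hl'⟩ := hu
  obtain ⟨rfl, hll'⟩ := Prod.mk.inj hl'
  obtain rfl : l = l' := mod_cast hll'
  have hC := (convex_newtonPolygon S c).shiftSet (a i) i
  have hCb := (hasIntegerBreaks_newtonPolygon S c).shiftSet (a i) i
  have hl : ∀ q ∈ shiftSet (NewtonPolygon S c) (a i) i, q.2 = l → -y l ≤ q.1 :=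
    fun q hq hql => by simpa using (ha i).1.le_of_mem_shiftSet hq (l := l) (by simp [hql])
  have hdown : ∀ q ∈ shiftSet (NewtonPolygon S c) (a i) i, q.2 = l - 1 →
      -y l - (a (i + 1) - a i) ≤ q.1 := fun q hq hql => by
    linarith [(ha (i + 1)).1.le_of_mem_shiftSet hq (l := l) (by push_cast; linarith)]
  have hup : ∀ q ∈ shiftSet (NewtonPolygon S c) (a i) i, q.2 = l + 1 →
      -y l - (a (i - 1) - a i) ≤ q.1 := fun q hq hql => by
    linarith [(ha (i - 1)).1.le_of_mem_shiftSet hq (l := l) (by push_cast; linarith)]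
  exact fun v w hvw => ⟨hCb.sub_mul_le_fst_of_snd_le hC hul rfl hl hdown hvw,
    hCb.sub_mul_le_fst_of_le_snd hC hul rfl hl hup hvw⟩

/-- Sector containment around an extremal point (claim from the proof of
Lemma 1): if `(u, l) ∈ P_i ∩ Y`, then every point `(v, w) ∈ P_i` with `w ≤ l`
satisfies `v ≥ u - (a (i+1) - a i)·(l - w)`, and every point `(v, w) ∈ P_i` with
`w ≥ l` satisfies `v ≥ u - (a (i-1) - a i)·(w - l)`. -/
theorem sector_containment
    (S : Finset ℤ) (hS : S.Nonempty) (c : ℤ → ℝ) (y : ℤ → ℝ) (a : ℤ → ℝ)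
    (ha : ∀ i : ℤ, IsMinimalLift y (NewtonPolygon S c) i (a i))
    (i : ℤ) (u : ℝ) (l : ℤ)
    (hu : (u, (l : ℝ)) ∈ shiftSet (NewtonPolygon S c) (a i) i ∩ YSet y) :
    ∀ v w : ℝ, (v, w) ∈ shiftSet (NewtonPolygon S c) (a i) i →
      (w ≤ (l : ℝ) → u - (a (i + 1) - a i) * ((l : ℝ) - w) ≤ v) ∧
      ((l : ℝ) ≤ w → u - (a (i - 1) - a i) * (w - (l : ℝ)) ≤ v) :=
  sector_containment_general S c y a ha i u l hu
end

section
/- Dual Nullstellensatz (classical, all finite truncations): let K be an algebraically closed field and F_1, …, F_s ∈ K[X_1, …, X_n]. Then the system F_1 = ⋯ = F_s = 0 has a solution in K^n if and only if for every N ∈ ℕ there exists a function y from ℕ^n to K with y(0) ≠ 0 such that for every multi-index I ∈ ℕ^n with i_1 + ⋯ + i_n ≤ N and every j ∈ {1, …, s} the (finite) sum over all multi-indices J of coeff_J(X^I · F_j) · y(J) equals 0. -/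
/-!
A sequence `y` on multi-indices is the same as the linear functional `P ↦ ∑_J coeff_J P · y J`
on polynomials, and `y` solves the truncated system iff this functional kills every `X^I F_j`
with `deg X^I ≤ N`. Evaluation at a common zero `x` is such a functional for all `N`, with
`y J = x^J`. Conversely, without common zeros the weak Nullstellensatz gives `1 = ∑ G_j F_j`;
for `N = max_j deg G_j` the functional then kills `1`, that is `y 0 = 0`.
-/

open MvPolynomial

namespace MvPolynomial

section DualPairing

variable {σ R : Type*} [CommSemiring R] {y : (σ →₀ ℕ) → R}

variable (y) in
noncomputable def dualPairing : MvPolynomial σ R →ₗ[R] R :=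
  (basisMonomials σ R).constr R y

theorem dualPairing_apply (p : MvPolynomial σ R) :
    dualPairing y p = ∑ J ∈ p.support, coeff J p * y J := by
  rw [dualPairing, Module.Basis.constr_apply]
  rfl

theorem dualPairing_monomial_one (J : σ →₀ ℕ) : dualPairing y (monomial J 1) = y J :=
  (basisMonomials σ R).constr_basis R y J

theorem dualPairing_one : dualPairing y 1 = y 0 := by
  simpa using dualPairing_monomial_one (y := y) 0

theorem dualPairing_evalPoint (x : σ → R) (p : MvPolynomial σ R) :
    dualPairing (fun J => J.prod fun i e => x i ^ e) p = eval x p := by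
  rw [dualPairing_apply, eval_eq]
  rfl

theorem dualPairing_mul_eq_zero_of_totalDegree_le {f g : MvPolynomial σ R} {N : ℕ}
    (hy : ∀ I : σ →₀ ℕ, I.degree ≤ N → dualPairing y (monomial I 1 * f) = 0)
    (hg : g.totalDegree ≤ N) : dualPairing y (g * f) = 0 := by
  rw [g.as_sum, Finset.sum_mul, map_sum]
  refine Finset.sum_eq_zero fun I hI => ?_
  have hIN : I.degree ≤ N := (le_totalDegree hI).trans hg
  rw [← mul_one (coeff I g), ← C_mul_monomial, mul_assoc, C_mul', map_smul, hy I hIN, smul_zero]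

end DualPairing

theorem exists_eval_eq_zero_of_ne_top {σ K : Type*} [Field K] [IsAlgClosed K] [Finite σ]
    {I : Ideal (MvPolynomial σ K)} (hI : I ≠ ⊤) : ∃ x : σ → K, ∀ p ∈ I, eval x p = 0 := by
  obtain ⟨M, hM, hIM⟩ := I.exists_le_maximal hI
  obtain ⟨x, rfl⟩ := eq_vanishingIdeal_singleton_of_isMaximal K hM
  exact ⟨x, fun p hp => by simpa using (mem_vanishingIdeal_singleton_iff x p).1 (hIM hp)⟩

end MvPolynomial

/-- Dual Nullstellensatz (classical, all finite truncations): over an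
algebraically closed field `K`, the system `F₁ = ⋯ = F_s = 0` has a solution in
`Kⁿ` iff for every `N` there is a function `y` on multi-indices with `y 0 ≠ 0`
such that for every multi-index `I` of total degree at most `N` and every `j`,
the sum over the support of `X^I · F j` of `coeff J (X^I · F j) · y J`
vanishes. -/
theorem dual_nullstellensatz
    (K : Type*) [Field K] [IsAlgClosed K] (n s : ℕ)
    (F : Fin s → MvPolynomial (Fin n) K) :
    (∃ x : Fin n → K, ∀ j : Fin s, eval x (F j) = 0) ↔
      (∀ N : ℕ, ∃ y : (Fin n →₀ ℕ) → K, y 0 ≠ 0 ∧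
        ∀ I : Fin n →₀ ℕ, (∑ t, I t) ≤ N → ∀ j : Fin s,
          ∑ J ∈ (monomial I (1 : K) * F j).support,
            coeff J (monomial I (1 : K) * F j) * y J = 0) := by
  constructor
  · rintro ⟨x, hx⟩ N
    refine ⟨fun J => J.prod fun i e => x i ^ e, by simp, fun I _ j => ?_⟩
    rw [← dualPairing_apply, dualPairing_evalPoint, map_mul, hx j, mul_zero]
  · intro h
    by_contra hno_zero
    have hspan : Ideal.span (Set.range F) = ⊤ := by
      by_contra hne_top
      obtain ⟨x, hx⟩ := exists_eval_eq_zero_of_ne_top hne_top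
      exact hno_zero ⟨x, fun j => hx _ (Ideal.subset_span ⟨j, rfl⟩)⟩
    obtain ⟨G, hG⟩ :=
      Ideal.mem_span_range_iff_exists_fun.mp (hspan ▸ Submodule.mem_top (x := 1))
    obtain ⟨y, hy0, hy⟩ := h (Finset.univ.sup fun j => (G j).totalDegree)
    refine hy0 ?_
    rw [← dualPairing_one (y := y), ← hG, map_sum]
    refine Finset.sum_eq_zero fun j _ => dualPairing_mul_eq_zero_of_totalDegree_le
      (fun I hI => ?_) (Finset.le_sup (f := fun j => (G j).totalDegree) (Finset.mem_univ j))
    rw [dualPairing_apply]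
    exact hy I (Finsupp.degree_eq_sum I ▸ hI) j
end
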